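/- In the stack machine with calls and returns, the step semantics preserves the invariant that the stack contains no return-address entries below the data reachable by the current instruction only if Pop refuses to pop return addresses; formally, the machine with the buggy Pop rule that removes an arbitrary stack element (including return addresses) violates end-to-end noninterference, while no single Pop in the correct machine can remove a return address. -/
import Mathlib


/-- The two-point label lattice: `L` (low/public) and `H` (high/secret). -/
inductive Lab where
  | L
  | H
deriving DecidableEq

/-- `L ⊑ H`; the flows-to ordering. -/
def Lab.flows : Lab → Lab → Prop
  | .H, .L => False
  | _, _ => True

/-- Join (least upper bound) of two labels. -/
def Lab.join : Lab → Lab → Lab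
  | .L, .L => .L
  | _, _ => .H

/-- A labeled integer `n@ℓ`. -/
structure LInt where
  val : Int
  lab : Lab
deriving DecidableEq

/-- Stack elements: labeled integers, or return frames `Ret(n, k)@ℓ`
recording a return address `n`, a result arity `k ∈ {0,1}`, and a label. -/
inductive SElt where
  | V (v : LInt)
  | Ret (n : Int) (k : ℕ) (ℓ : Lab)
deriving DecidableEq

/-- Instructions of the stack machine with calls and returns. -/
inductive Instr where
  | Push (v : LInt)
  | Pop
  | Load
  | Store
  | Add
  | Noop
  | Halt
  | Jump
  | Call (k k' : ℕ)
  | Return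
deriving DecidableEq

/-- Lookup a list at an integer index. -/
def getI {α : Type} (xs : List α) (i : Int) : Option α :=
  if 0 ≤ i then xs[i.toNat]? else none

/-- Update a list at an integer index. -/
def setI {α : Type} (xs : List α) (i : Int) (a : α) : List α :=
  if 0 ≤ i then xs.set i.toNat a else xs

/-- A machine state: a labeled program counter, a stack of stack elements, a
data memory, and an instruction memory. -/
structure St where
  pc : LInt
  stk : List SElt
  mem : List LInt
  imem : List Instr

/-- Indistinguishability of labeled integers. -/
def LInt.indist (a b : LInt) : Prop :=
  (a.lab = Lab.H ∧ b.lab = Lab.H) ∨ (a.val = b.val ∧ a.lab = Lab.L ∧ b.lab = Lab.L)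

/-- Indistinguishability of stack elements: labeled integers are related as
usual, return frames are related iff both labels are `H` or both are `L`
with equal addresses and arities, and a labeled integer is never related to
a return frame. -/
def SElt.indist : SElt → SElt → Prop
  | .V a, .V b => LInt.indist a b
  | .Ret n1 k1 ℓ1, .Ret n2 k2 ℓ2 =>
      (ℓ1 = Lab.H ∧ ℓ2 = Lab.H) ∨ (n1 = n2 ∧ k1 = k2 ∧ ℓ1 = Lab.L ∧ ℓ2 = Lab.L)
  | _, _ => False

/-- Indistinguishability of instructions. -/
def Instr.indist : Instr → Instr → Prop
  | .Push a, .Push b => LInt.indist a b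
  | i1, i2 => i1 = i2

/-- Pointwise lifting of a relation to lists. -/
def ListIndist {α : Type} (R : α → α → Prop) (xs ys : List α) : Prop :=
  xs.length = ys.length ∧
  ∀ j (h1 : j < xs.length) (h2 : j < ys.length),
    R (xs.get ⟨j, h1⟩) (ys.get ⟨j, h2⟩)

/-- Taint a labeled integer with a label. -/
def LInt.taint (a : LInt) (ℓ : Lab) : LInt := ⟨a.val, a.lab.join ℓ⟩

/-- The step relation of the stack machine with calls and returns.  The
parameter `buggyPop` enables the buggy `Pop*` rule that can remove an
arbitrary stack element (including return frames); when `buggyPop = false`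
only the correct `Pop` rule (removing a labeled integer) is available. -/
inductive Step (buggyPop : Bool) : St → St → Prop where
  | noop {pc ℓpc s m i} :
      getI i pc = some .Noop →
      Step buggyPop ⟨⟨pc, ℓpc⟩, s, m, i⟩ ⟨⟨pc + 1, ℓpc⟩, s, m, i⟩
  | push {pc ℓpc s m i v} :
      getI i pc = some (.Push v) →
      Step buggyPop ⟨⟨pc, ℓpc⟩, s, m, i⟩ ⟨⟨pc + 1, ℓpc⟩, .V v :: s, m, i⟩
  | pop {pc ℓpc v s m i} :
      getI i pc = some .Pop →
      Step buggyPop ⟨⟨pc, ℓpc⟩, .V v :: s, m, i⟩ ⟨⟨pc + 1, ℓpc⟩, s, m, i⟩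
  | popBuggy {pc ℓpc e s m i} :
      buggyPop = true →
      getI i pc = some .Pop →
      Step buggyPop ⟨⟨pc, ℓpc⟩, e :: s, m, i⟩ ⟨⟨pc + 1, ℓpc⟩, s, m, i⟩
  | load {pc ℓpc p ℓp s m i n ℓn} :
      getI i pc = some .Load →
      getI m p = some ⟨n, ℓn⟩ →
      Step buggyPop ⟨⟨pc, ℓpc⟩, .V ⟨p, ℓp⟩ :: s, m, i⟩
           ⟨⟨pc + 1, ℓpc⟩, .V ⟨n, ℓn.join ℓp⟩ :: s, m, i⟩
  | store {pc ℓpc p ℓp n ℓn s m i n' ℓn'} :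
      getI i pc = some .Store →
      getI m p = some ⟨n', ℓn'⟩ →
      (ℓp.join ℓpc).flows ℓn' →
      Step buggyPop ⟨⟨pc, ℓpc⟩, .V ⟨p, ℓp⟩ :: .V ⟨n, ℓn⟩ :: s, m, i⟩
           ⟨⟨pc + 1, ℓpc⟩, s, setI m p ⟨n, (ℓn.join ℓp).join ℓpc⟩, i⟩
  | add {pc ℓpc n1 ℓ1 n2 ℓ2 s m i} :
      getI i pc = some .Add →
      Step buggyPop ⟨⟨pc, ℓpc⟩, .V ⟨n1, ℓ1⟩ :: .V ⟨n2, ℓ2⟩ :: s, m, i⟩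
           ⟨⟨pc + 1, ℓpc⟩, .V ⟨n1 + n2, ℓ1.join ℓ2⟩ :: s, m, i⟩
  | jump {pc ℓpc n ℓn s m i} :
      getI i pc = some .Jump →
      Step buggyPop ⟨⟨pc, ℓpc⟩, .V ⟨n, ℓn⟩ :: s, m, i⟩
           ⟨⟨n, ℓn.join ℓpc⟩, s, m, i⟩
  | call {pc ℓpc n ℓn k k' s m i} {ns : List LInt} :
      getI i pc = some (.Call k k') →
      k' ≤ 1 →
      ns.length = k →
      Step buggyPop ⟨⟨pc, ℓpc⟩, .V ⟨n, ℓn⟩ :: (ns.map SElt.V ++ s), m, i⟩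
           ⟨⟨n, ℓn.join ℓpc⟩, ns.map SElt.V ++ (SElt.Ret (pc + 1) k' ℓpc :: s), m, i⟩
  | ret {pc ℓpc n ℓ k' s m i} {ns ns' : List LInt} :
      getI i pc = some .Return →
      ns.length = k' →
      Step buggyPop ⟨⟨pc, ℓpc⟩, ns.map SElt.V ++ ns'.map SElt.V ++ (SElt.Ret n k' ℓ :: s), m, i⟩
           ⟨⟨n, ℓ⟩, (ns.map (fun a => a.taint ℓpc)).map SElt.V ++ s, m, i⟩

/-- Memory-indistinguishability of states. -/
def IndistMem (S1 S2 : St) : Prop :=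
  (S1.pc.lab = Lab.H ∧ S2.pc.lab = Lab.H) ∨
  (S1.pc.lab = Lab.L ∧ S2.pc.lab = Lab.L ∧
    ListIndist LInt.indist S1.mem S2.mem ∧
    ListIndist Instr.indist S1.imem S2.imem)

/-- Initial states: `pc = 0@L`, empty stack, all-`0@L` memory. -/
def Initial (S : St) : Prop :=
  S.pc = (⟨0, Lab.L⟩ : LInt) ∧ S.stk = [] ∧
  ∀ v ∈ S.mem, v = (⟨0, Lab.L⟩ : LInt)

/-- A halted state. -/
def Halted (S : St) : Prop := getI S.imem S.pc.val = some .Halt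

/-- Multi-step execution. -/
def Exec (buggyPop : Bool) : St → St → Prop := Relation.ReflTransGen (Step buggyPop)

/-- A stuck state. -/
def Stuck (buggyPop : Bool) (S : St) : Prop := ∀ S', ¬ Step buggyPop S S'


/-- The attack program: the secret `s` is the jump target pushed at address 9. -/
def prog (s : Int) : List Instr :=
  [.Push ⟨6, .L⟩, .Call 0 0, .Push ⟨1, .L⟩, .Push ⟨0, .L⟩, .Store, .Halt,
   .Push ⟨9, .L⟩, .Call 0 0, .Halt, .Push ⟨s, .H⟩, .Jump, .Pop, .Return, .Return]

lemma halt_stuck {b : Bool} (S : St) (h : getI S.imem S.pc.val = some .Halt) :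
    Stuck b S := by
  intro S' st
  cases st <;> simp_all

/-- The machine with the buggy `Pop*` rule that can remove return addresses
violates end-to-end noninterference (for initial states ending in halted
states whose pc label is `L`), while in the correct machine no single `Pop`
step can remove a return address: every `Pop` step removes a labeled integer
from the top of the stack. -/
theorem buggy_pop_breaks_eeni_and_correct_pop_preserves_returns :
    (∃ S1 S2 S1' S2' : St,
      Initial S1 ∧ Initial S2 ∧ IndistMem S1 S2 ∧
      Exec true S1 S1' ∧ Stuck true S1' ∧ Halted S1' ∧ S1'.pc.lab = Lab.L ∧
      Exec true S2 S2' ∧ Stuck true S2' ∧ Halted S2' ∧ S2'.pc.lab = Lab.L ∧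
      ¬ IndistMem S1' S2') ∧
    (∀ S S' : St, Step false S S' → getI S.imem S.pc.val = some .Pop →
      ∃ v : LInt, S.stk = SElt.V v :: S'.stk) := by
  constructor
  · refine ⟨⟨⟨0, .L⟩, [], [⟨0, .L⟩], prog 11⟩, ⟨⟨0, .L⟩, [], [⟨0, .L⟩], prog 13⟩,
      ⟨⟨5, .L⟩, [], [⟨1, .L⟩], prog 11⟩,
      ⟨⟨8, .L⟩, [SElt.Ret 2 0 .L], [⟨0, .L⟩], prog 13⟩, ?_, ?_, ?_, ?_, ?_, ?_, rfl,
      ?_, ?_, ?_, rfl, ?_⟩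
    · exact ⟨rfl, rfl, by intro v hv; simpa using hv⟩
    · exact ⟨rfl, rfl, by intro v hv; simpa using hv⟩
    · refine Or.inr ⟨rfl, rfl, ⟨rfl, ?_⟩, ⟨rfl, ?_⟩⟩
      · intro j h1 h2
        simp only [List.length_cons, List.length_nil] at h1
        interval_cases j
        exact Or.inr ⟨rfl, rfl, rfl⟩
      · intro j h1 h2
        simp only [prog, List.length_cons, List.length_nil] at h1
        interval_cases j <;>
          first
            | exact rfl
            | exact Or.inr ⟨rfl, rfl, rfl⟩
            | exact Or.inl ⟨rfl, rfl⟩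
    · -- execution with secret 11
      refine .head (Step.push (v := ⟨6, .L⟩) (by decide)) ?_
      refine .head (Step.call (ns := []) (k' := 0) (by decide) (by decide) rfl) ?_  -- pc 1 → 6
      refine .head (Step.push (v := ⟨9, .L⟩) (by decide)) ?_
      refine .head (Step.call (ns := []) (k' := 0) (by decide) (by decide) rfl) ?_  -- 7 → 9
      refine .head (Step.push (v := ⟨11, .H⟩) (by decide)) ?_
      refine .head (Step.jump (by decide)) ?_          -- 10 → 11
      refine .head (Step.popBuggy rfl (by decide)) ?_  -- 11 → 12
      refine .head (Step.ret (ns := []) (ns' := []) (by decide) rfl) ?_  -- 12 → 2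
      refine .head (Step.push (v := ⟨1, .L⟩) (by decide)) ?_
      refine .head (Step.push (v := ⟨0, .L⟩) (by decide)) ?_
      refine .head (Step.store (n' := 0) (ℓn' := .L) (by decide) (by decide) trivial) ?_  -- 4 → 5
      exact .refl
    · exact halt_stuck _ (by decide)
    · exact (by decide : getI (prog 11) (5 : Int) = some Instr.Halt)
    · -- execution with secret 13
      refine .head (Step.push (v := ⟨6, .L⟩) (by decide)) ?_
      refine .head (Step.call (ns := []) (k' := 0) (by decide) (by decide) rfl) ?_
      refine .head (Step.push (v := ⟨9, .L⟩) (by decide)) ?_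
      refine .head (Step.call (ns := []) (k' := 0) (by decide) (by decide) rfl) ?_
      refine .head (Step.push (v := ⟨13, .H⟩) (by decide)) ?_
      refine .head (Step.jump (by decide)) ?_
      refine .head (Step.ret (ns := []) (ns' := []) (by decide) rfl) ?_
      exact .refl
    · exact halt_stuck _ (by decide)
    · exact (by decide : getI (prog 13) (8 : Int) = some Instr.Halt)
    · rintro (⟨h, -⟩ | ⟨-, -, ⟨-, hm⟩, -⟩)
      · exact absurd h (by decide)
      · have := hm 0 (by decide) (by decide)
        rcases this with ⟨h, -⟩ | ⟨h, -⟩ <;> simp_all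
  · intro S S' st h
    cases st <;> simp_all
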